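/- arXiv:2401.02393 — 2 statements merged into one kernel-verified Lean document; each statement's English description precedes it below -/
import Mathlib

section
/- Let d₁ be a natural number, d = 2·d₁, η : Fin d₁ → ℝ, O a real orthogonal d×d matrix (Oᵀ * O = 1), and Λ = Oᵀ * Σ(η) * O. Suppose h : Fin d → ℝ → ℝ satisfies: h i (0) = 0 for all i; h (2k) = h (2k+1) as functions for all k < d₁; and for every i and t, HasDerivAt (h i) (2·(h i t)² − (η ⌊i/2⌋)²/8) t. Suppose g : ℝ → ℝ satisfies g(0) = 1 and HasDerivAt g (g t · ∑_{i} h i t) t for every t. Define f : ℝ → (Fin d → ℝ) → ℂ by f t w = g(t) · exp( ∑_{i} h i t · ((O.mulVec w) i)² ) (a real number coerced to ℂ). Then f 0 w = 1 for all w, and for all (t, w): −∂f/∂t (t,w) + (1/2)·∑_{j} ∂²f/∂wⱼ² (t,w) + (Complex.I/2)·∑_{j} ((Λᵀ.mulVec w) j) · ∂f/∂wⱼ (t,w) − (1/8)·( w ⬝ᵥ ((Λ*Λᵀ).mulVec w) ) · f(t,w) = 0. -/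
/-!
With `A(t) = Oᵀ diag(h(t)) O` the ansatz is the Gaussian `f(t,w) = g(t) exp(wᵀ A(t) w)`. Along the
coordinate lines, `∂ⱼ f = 2 (Aw)ⱼ f` and `∂ⱼ² f = (4 (Aw)ⱼ² + 2 Aⱼⱼ) f`; orthogonality of `O` turns
`|Aw|²` into `∑ hᵢ² (Ow)ᵢ²`, `tr A` into `∑ hᵢ`, and `ΛΛᵀ` into `Oᵀ diag(η_{⌊i/2⌋}²) O`. The drift
term is `2 wᵀ Λ A w = 2 (Ow)ᵀ Σ(η) diag(h) (Ow)`, which vanishes because `h` is constant on the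
2×2 blocks of `Σ(η)`, so that `Σ(η) diag(h)` is again skew. The remaining terms cancel by the
Riccati equations for the `hᵢ` and the equation for `g`.
-/
open Matrix

/-- The canonical skew block matrix `Σ(η)` of size `d × d` determined by `η : Fin d₁ → ℝ`:
its only nonzero entries are `Σ(η) (2k) (2k+1) = -η k` and `Σ(η) (2k+1) (2k) = η k`
for `k < d₁` (0-based indices). -/
def canonicalSkew (d d₁ : ℕ) (η : Fin d₁ → ℝ) : Matrix (Fin d) (Fin d) ℝ :=
  Matrix.of fun i j =>
    if h : i.val / 2 < d₁ ∧ i.val / 2 = j.val / 2 then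
      if i.val % 2 = 0 ∧ j.val % 2 = 1 then -η ⟨i.val / 2, h.1⟩
      else if i.val % 2 = 1 ∧ j.val % 2 = 0 then η ⟨i.val / 2, h.1⟩
      else 0
    else 0

/-- For `d = 2·d₁` and `k : Fin d₁`, the index `2k` viewed in `Fin (2d₁)`. -/
def idx0 {d₁ : ℕ} (k : Fin d₁) : Fin (2 * d₁) :=
  ⟨2 * k.val, by have := k.isLt; omega⟩

/-- For `d = 2·d₁` and `k : Fin d₁`, the index `2k+1` viewed in `Fin (2d₁)`. -/
def idx1 {d₁ : ℕ} (k : Fin d₁) : Fin (2 * d₁) :=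
  ⟨2 * k.val + 1, by have := k.isLt; omega⟩

/-- The map `Fin (2d₁) → Fin d₁` sending `2k` and `2k+1` to `k` (i.e. `i ↦ ⌊i/2⌋`). -/
def half {d₁ : ℕ} (i : Fin (2 * d₁)) : Fin d₁ :=
  ⟨i.val / 2, by have := i.isLt; omega⟩

/-- The index paired with `i` in its 2×2 block: `2k ↦ 2k+1` and `2k+1 ↦ 2k`. -/
def blockPartner {d₁ : ℕ} (i : Fin (2 * d₁)) : Fin (2 * d₁) :=
  ⟨i.val + 1 - 2 * (i.val % 2), by omega⟩

def blockSign {d₁ : ℕ} (i : Fin (2 * d₁)) : ℝ := if i.val % 2 = 0 then -1 else 1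

section CanonicalSkew

variable {d₁ : ℕ} (i : Fin (2 * d₁))

lemma blockPartner_blockPartner : blockPartner (blockPartner i) = i := by
  ext; simp only [blockPartner]; omega

lemma half_blockPartner : half (blockPartner i) = half i := by
  ext; simp only [half, blockPartner]; omega

lemma blockSign_blockPartner : blockSign (blockPartner i) = -blockSign i := by
  have hpar : (i.val + 1 - 2 * (i.val % 2)) % 2 = 0 ↔ ¬i.val % 2 = 0 := by omega
  simp only [blockSign, blockPartner, hpar]; split_ifs <;> norm_num

lemma blockSign_mul_self : blockSign i * blockSign i = 1 := by
  simp only [blockSign]; split_ifs <;> norm_num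

lemma eq_idx0_or_eq_idx1_half : i = idx0 (half i) ∨ i = idx1 (half i) := by
  simp only [Fin.ext_iff, idx0, idx1, half]; omega

lemma apply_blockPartner_of_pair {α : Type*} {c : Fin (2 * d₁) → α}
    (hc : ∀ k, c (idx0 k) = c (idx1 k)) : c (blockPartner i) = c i := by
  have key : ∀ k : Fin d₁, blockPartner (idx0 k) = idx1 k ∧ blockPartner (idx1 k) = idx0 k := by
    intro k; simp only [Fin.ext_iff, blockPartner, idx0, idx1]; omega
  rcases eq_idx0_or_eq_idx1_half i with hi | hi <;> rw [hi]
  · rw [(key _).1, hc]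
  · rw [(key _).2, hc]

lemma canonicalSkew_apply (η : Fin d₁ → ℝ) (k : Fin (2 * d₁)) :
    canonicalSkew (2 * d₁) d₁ η i k =
      if k = blockPartner i then blockSign i * η (half i) else 0 := by
  have := i.isLt
  simp only [canonicalSkew, of_apply, blockSign, half, blockPartner, Fin.ext_iff]
  split_ifs <;> first | (exfalso; omega) | ring1

lemma blockPartner_injective : Function.Injective (blockPartner (d₁ := d₁)) :=
  Function.LeftInverse.injective blockPartner_blockPartner

variable (η : Fin d₁ → ℝ)

lemma canonicalSkew_transpose : (canonicalSkew (2 * d₁) d₁ η)ᵀ = -canonicalSkew (2 * d₁) d₁ η := by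
  ext i k
  simp only [transpose_apply, Matrix.neg_apply, canonicalSkew_apply]
  by_cases hk : k = blockPartner i
  · subst hk
    simp [blockPartner_blockPartner, blockSign_blockPartner, half_blockPartner]
  · have hi : i ≠ blockPartner k := fun hi => hk (hi ▸ (blockPartner_blockPartner k).symm)
    simp [hk, hi]

lemma canonicalSkew_mul_transpose :
    canonicalSkew (2 * d₁) d₁ η * (canonicalSkew (2 * d₁) d₁ η)ᵀ =
      diagonal fun i => η (half i) ^ 2 := by
  ext i j
  simp only [mul_apply, transpose_apply, canonicalSkew_apply, ite_mul, zero_mul, mul_ite, mul_zero,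
    Finset.sum_ite_eq', Finset.mem_univ, if_true, blockPartner_injective.eq_iff]
  by_cases hij : i = j
  · subst hij
    rw [diagonal_apply_eq, if_pos rfl]
    linear_combination η (half i) ^ 2 * blockSign_mul_self i
  · rw [diagonal_apply_ne _ hij, if_neg (Ne.symm hij)]

lemma canonicalSkew_mul_diagonal_comm {c : Fin (2 * d₁) → ℝ} (hc : ∀ k, c (idx0 k) = c (idx1 k)) :
    canonicalSkew (2 * d₁) d₁ η * diagonal c = diagonal c * canonicalSkew (2 * d₁) d₁ η := by
  ext i k
  rw [mul_diagonal, diagonal_mul, canonicalSkew_apply]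
  split_ifs with hk
  · rw [hk, apply_blockPartner_of_pair i hc, mul_comm]
  · simp

end CanonicalSkew

section QuadraticForm

variable {n : Type*} [Fintype n]

lemma dotProduct_mulVec_self_eq_zero_of_transpose_eq_neg {R : Type*} [CommRing R]
    [NoZeroDivisors R] [CharZero R] {M : Matrix n n R} (hM : Mᵀ = -M) (v : n → R) :
    v ⬝ᵥ M *ᵥ v = 0 :=
  self_eq_neg.mp <| by
    conv_lhs => rw [dotProduct_mulVec, ← mulVec_transpose, hM, neg_mulVec, neg_dotProduct,
      dotProduct_comm]

lemma dotProduct_diagonal_mulVec_self {R : Type*} [CommSemiring R] [DecidableEq n] (c v : n → R) :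
    v ⬝ᵥ diagonal c *ᵥ v = ∑ i, c i * v i ^ 2 := by
  simp only [dotProduct, mulVec_diagonal]
  exact Finset.sum_congr rfl fun i _ => by ring

lemma dotProduct_transpose_mul_mul_mulVec {m R : Type*} [Fintype m] [CommSemiring R]
    (O : Matrix m n R) (M : Matrix m m R) (w : n → R) :
    w ⬝ᵥ (Oᵀ * M * O) *ᵥ w = (O *ᵥ w) ⬝ᵥ M *ᵥ (O *ᵥ w) := by
  rw [← mulVec_mulVec, ← mulVec_mulVec, dotProduct_mulVec, vecMul_transpose]

lemma update_dotProduct_mulVec_update {R : Type*} [CommRing R] [DecidableEq n]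
    (A : Matrix n n R) (w : n → R) (j : n) (s : R) :
    Function.update w j s ⬝ᵥ A *ᵥ Function.update w j s =
      w ⬝ᵥ A *ᵥ w + ((A *ᵥ w) j + (Aᵀ *ᵥ w) j) * (s - w j) + A j j * (s - w j) ^ 2 := by
  have hupd : Function.update w j s = w + Pi.single j (s - w j) := by
    ext i; by_cases hi : i = j
    · subst hi; simp
    · simp [hi]
  rw [hupd]
  simp only [mulVec_add, dotProduct_add, add_dotProduct, mulVec_single, single_dotProduct,
    op_smul_eq_smul, dotProduct_smul, smul_eq_mul, mulVec_transpose]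
  simp only [vecMul, col_apply']
  ring

lemma mulVec_dotProduct_mulVec {R : Type*} [CommSemiring R] (A : Matrix n n R) (w : n → R) :
    A *ᵥ w ⬝ᵥ A *ᵥ w = w ⬝ᵥ (Aᵀ * A) *ᵥ w := by
  rw [← mulVec_mulVec, dotProduct_mulVec w Aᵀ, vecMul_transpose]

end QuadraticForm

section Orthogonal

variable {m n R : Type*} [Fintype n] [CommRing R]

lemma transpose_transpose_mul_mul (O : Matrix n m R) (M : Matrix n n R) :
    (Oᵀ * M * O)ᵀ = Oᵀ * Mᵀ * O := by
  simp only [transpose_mul, transpose_transpose, Matrix.mul_assoc]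

variable [Fintype m] [DecidableEq n] {O : Matrix n m R} (hO : O * Oᵀ = 1)
include hO

lemma transpose_mul_mul_mul_transpose_mul_mul (M N : Matrix n n R) :
    (Oᵀ * M * O) * (Oᵀ * N * O) = Oᵀ * (M * N) * O := by
  simp only [Matrix.mul_assoc]
  rw [← Matrix.mul_assoc O, hO, Matrix.one_mul]

lemma trace_transpose_mul_mul (M : Matrix n n R) : trace (Oᵀ * M * O) = trace M := by
  rw [trace_mul_cycle, hO, Matrix.one_mul]

end Orthogonal

section ConjugatedSkew

variable {m : Type*} [Fintype m] {d₁ : ℕ} (η : Fin d₁ → ℝ) {O : Matrix (Fin (2 * d₁)) m ℝ}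
  (hO : O * Oᵀ = 1) (w : m → ℝ)
include hO

lemma dotProduct_conj_canonicalSkew_mul_transpose_mulVec :
    w ⬝ᵥ ((Oᵀ * canonicalSkew (2 * d₁) d₁ η * O) * (Oᵀ * canonicalSkew (2 * d₁) d₁ η * O)ᵀ) *ᵥ w =
      ∑ i, η (half i) ^ 2 * (O *ᵥ w) i ^ 2 := by
  rw [transpose_transpose_mul_mul, transpose_mul_mul_mul_transpose_mul_mul hO,
    canonicalSkew_mul_transpose, dotProduct_transpose_mul_mul_mulVec,
    dotProduct_diagonal_mulVec_self]

lemma transpose_conj_canonicalSkew_mulVec_dotProduct_conj_diagonal_mulVec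
    {c : Fin (2 * d₁) → ℝ} (hc : ∀ k, c (idx0 k) = c (idx1 k)) :
    (Oᵀ * canonicalSkew (2 * d₁) d₁ η * O)ᵀ *ᵥ w ⬝ᵥ (Oᵀ * diagonal c * O) *ᵥ w = 0 := by
  have hskew : (canonicalSkew (2 * d₁) d₁ η * diagonal c)ᵀ =
      -(canonicalSkew (2 * d₁) d₁ η * diagonal c) := by
    rw [transpose_mul, diagonal_transpose, canonicalSkew_transpose, Matrix.mul_neg,
      canonicalSkew_mul_diagonal_comm η hc]
  rw [mulVec_transpose, ← dotProduct_mulVec, mulVec_mulVec,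
    transpose_mul_mul_mul_transpose_mul_mul hO, dotProduct_transpose_mul_mul_mulVec]
  exact dotProduct_mulVec_self_eq_zero_of_transpose_eq_neg hskew _

end ConjugatedSkew

section Derivatives

open Real

lemma hasDerivAt_mul_exp_quadratic (K a b c s₀ s : ℝ) :
    HasDerivAt (fun s => K * exp (a + b * (s - s₀) + c * (s - s₀) ^ 2))
      (K * exp (a + b * (s - s₀) + c * (s - s₀) ^ 2) * (b + 2 * c * (s - s₀))) s := by
  have hlin : HasDerivAt (fun s => s - s₀) 1 s := (hasDerivAt_id' s).sub_const s₀
  have hq := ((hlin.const_mul b).const_add a).fun_add ((hlin.fun_pow 2).const_mul c)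
  exact (hq.exp.const_mul K).congr_deriv (by ring)

lemma deriv_ofReal_mul_exp_quadratic (K a b c s₀ : ℝ) :
    deriv (fun s : ℝ => ((K * exp (a + b * (s - s₀) + c * (s - s₀) ^ 2) : ℝ) : ℂ)) =
      fun s => ((K * exp (a + b * (s - s₀) + c * (s - s₀) ^ 2) * (b + 2 * c * (s - s₀)) : ℝ) : ℂ) :=
  funext fun s => (hasDerivAt_mul_exp_quadratic K a b c s₀ s).ofReal_comp.deriv

lemma deriv_deriv_ofReal_mul_exp_quadratic (K a b c s₀ : ℝ) :
    deriv (deriv fun s : ℝ => ((K * exp (a + b * (s - s₀) + c * (s - s₀) ^ 2) : ℝ) : ℂ)) s₀ =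
      ((K * exp a * (b ^ 2 + 2 * c) : ℝ) : ℂ) := by
  rw [deriv_ofReal_mul_exp_quadratic]
  have hlin : HasDerivAt (fun s => b + 2 * c * (s - s₀)) (2 * c * 1) s₀ :=
    (((hasDerivAt_id' s₀).sub_const s₀).const_mul (2 * c)).const_add b
  rw [((hasDerivAt_mul_exp_quadratic K a b c s₀ s₀).fun_mul hlin).ofReal_comp.deriv]
  congr 1
  simp only [sub_self, mul_zero, add_zero, zero_pow two_ne_zero]
  ring

lemma hasDerivAt_mul_exp_sum_mul_sq {ι : Type*} [Fintype ι] {g : ℝ → ℝ} {g' : ℝ}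
    {h : ι → ℝ → ℝ} {h' : ι → ℝ} (u : ι → ℝ) {t : ℝ} (hg : HasDerivAt g g' t)
    (hh : ∀ i, HasDerivAt (h i) (h' i) t) :
    HasDerivAt (fun s => g s * exp (∑ i, h i s * u i ^ 2))
      ((g' + g t * ∑ i, h' i * u i ^ 2) * exp (∑ i, h i t * u i ^ 2)) t := by
  have hsum := HasDerivAt.fun_sum (u := Finset.univ) fun i _ => (hh i).mul_const (u i ^ 2)
  exact (hg.mul hsum.exp).congr_deriv (by ring)

variable {n : Type*} [Fintype n] [DecidableEq n] (K : ℝ) {A : Matrix n n ℝ} (hA : Aᵀ = A)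
  (w : n → ℝ) (j : n)

include hA in
lemma ofReal_mul_exp_quadraticForm_update :
    (fun s => ((K * exp (Function.update w j s ⬝ᵥ A *ᵥ Function.update w j s) : ℝ) : ℂ)) =
      fun s => ((K * exp (w ⬝ᵥ A *ᵥ w + 2 * (A *ᵥ w) j * (s - w j) + A j j * (s - w j) ^ 2) : ℝ) : ℂ) := by
  funext s
  rw [update_dotProduct_mulVec_update, hA, ← two_mul]

include hA in
lemma deriv_ofReal_mul_exp_quadraticForm_update :
    deriv (fun s => ((K * exp (Function.update w j s ⬝ᵥ A *ᵥ Function.update w j s) : ℝ) : ℂ)) (w j) =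
      ((K * exp (w ⬝ᵥ A *ᵥ w) * (2 * (A *ᵥ w) j) : ℝ) : ℂ) := by
  rw [ofReal_mul_exp_quadraticForm_update K hA, deriv_ofReal_mul_exp_quadratic]
  simp

include hA in
lemma deriv_deriv_ofReal_mul_exp_quadraticForm_update :
    deriv (deriv fun s => ((K * exp (Function.update w j s ⬝ᵥ A *ᵥ Function.update w j s) : ℝ) : ℂ))
        (w j) =
      ((K * exp (w ⬝ᵥ A *ᵥ w) * ((2 * (A *ᵥ w) j) ^ 2 + 2 * A j j) : ℝ) : ℂ) := by
  rw [ofReal_mul_exp_quadraticForm_update K hA, deriv_deriv_ofReal_mul_exp_quadratic]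

include hA in
lemma sum_mul_deriv_ofReal_mul_exp_quadraticForm_update (y : n → ℝ) :
    ∑ j, (y j : ℂ) * deriv (fun s => ((K * exp (Function.update w j s ⬝ᵥ
        A *ᵥ Function.update w j s) : ℝ) : ℂ)) (w j) =
      ((2 * K * exp (w ⬝ᵥ A *ᵥ w) * (y ⬝ᵥ A *ᵥ w) : ℝ) : ℂ) := by
  simp only [deriv_ofReal_mul_exp_quadraticForm_update K hA]
  simp only [dotProduct, Finset.mul_sum]
  push_cast
  exact Finset.sum_congr rfl fun _ _ => by ring

end Derivatives

section GaussianAnsatz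

open Real

variable {m n : Type*} [Fintype m] [Fintype n] [DecidableEq n] [DecidableEq m]
  {O : Matrix n m ℝ} (hO : O * Oᵀ = 1) (c : n → ℝ) (K : ℝ) (w : m → ℝ)

omit [Fintype m] [DecidableEq m] in
lemma transpose_conj_diagonal : (Oᵀ * diagonal c * O)ᵀ = Oᵀ * diagonal c * O := by
  rw [transpose_transpose_mul_mul, diagonal_transpose]

include hO in
lemma sum_deriv_deriv_ofReal_mul_exp_conj_diagonal :
    ∑ j, deriv (deriv fun s => ((K * exp (Function.update w j s ⬝ᵥ
        (Oᵀ * diagonal c * O) *ᵥ Function.update w j s) : ℝ) : ℂ)) (w j) =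
      ((K * exp (w ⬝ᵥ (Oᵀ * diagonal c * O) *ᵥ w) *
        (4 * ∑ i, c i ^ 2 * (O *ᵥ w) i ^ 2 + 2 * ∑ i, c i) : ℝ) : ℂ) := by
  simp only [deriv_deriv_ofReal_mul_exp_quadraticForm_update K (transpose_conj_diagonal c)]
  set A := Oᵀ * diagonal c * O
  have hsq : ∑ j, (A *ᵥ w) j ^ 2 = ∑ i, c i ^ 2 * (O *ᵥ w) i ^ 2 := by
    calc ∑ j, (A *ᵥ w) j ^ 2 = A *ᵥ w ⬝ᵥ A *ᵥ w := by simp only [dotProduct, sq]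
      _ = ∑ i, c i ^ 2 * (O *ᵥ w) i ^ 2 := by
        rw [mulVec_dotProduct_mulVec, transpose_conj_diagonal,
          transpose_mul_mul_mul_transpose_mul_mul hO, diagonal_mul_diagonal,
          dotProduct_transpose_mul_mul_mulVec, dotProduct_diagonal_mulVec_self]
        simp only [← sq]
  have htr : ∑ j, A j j = ∑ i, c i := by
    change trace A = _
    rw [trace_transpose_mul_mul hO, trace_diagonal]
  simp only [mul_pow, ← Complex.ofReal_sum, ← Finset.mul_sum, Finset.sum_add_distrib, hsq, htr]
  norm_num

end GaussianAnsatz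


/-- If the `h i` solve the Riccati ODEs `h_i' = 2h_i² − η_{⌊i/2⌋}²/8` with `h_i(0)=0`,
paired on the 2×2 blocks, and `g' = g·∑ᵢ hᵢ` with `g(0)=1`, then the ansatz
`f(t,w) = g(t)·exp(∑ᵢ hᵢ(t)(Ow)ᵢ²)` satisfies `f(0,·) = 1` and the PDE
`−∂ₜf + ½Δf + (i/2)∑ⱼ(wᵀΛ)ⱼ∂ⱼf − (1/8)(wᵀΛΛᵀw)f = 0`. -/
theorem ansatz_solves_levy_pde (d₁ : ℕ) (η : Fin d₁ → ℝ)
    (O : Matrix (Fin (2 * d₁)) (Fin (2 * d₁)) ℝ) (hO : Oᵀ * O = 1)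
    (Λ : Matrix (Fin (2 * d₁)) (Fin (2 * d₁)) ℝ)
    (hΛ : Λ = Oᵀ * canonicalSkew (2 * d₁) d₁ η * O)
    (h : Fin (2 * d₁) → ℝ → ℝ)
    (h0 : ∀ i, h i 0 = 0)
    (hpair : ∀ k : Fin d₁, h (idx0 k) = h (idx1 k))
    (hderiv : ∀ i t, HasDerivAt (h i) (2 * (h i t) ^ 2 - (η (half i)) ^ 2 / 8) t)
    (g : ℝ → ℝ) (hg0 : g 0 = 1)
    (hgderiv : ∀ t, HasDerivAt g (g t * ∑ i, h i t) t)
    (f : ℝ → (Fin (2 * d₁) → ℝ) → ℂ)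
    (hf : ∀ t w, f t w =
      ((g t * Real.exp (∑ i, h i t * (O.mulVec w i) ^ 2) : ℝ) : ℂ)) :
    (∀ w, f 0 w = 1) ∧
    ∀ (t : ℝ) (w : Fin (2 * d₁) → ℝ),
      -(deriv (fun s => f s w) t)
      + (1 / 2) * ∑ j, deriv (deriv (fun s => f t (Function.update w j s))) (w j)
      + (Complex.I / 2) * ∑ j, ((Λᵀ.mulVec w j : ℝ) : ℂ) *
          deriv (fun s => f t (Function.update w j s)) (w j)
      - (1 / 8) * ((w ⬝ᵥ ((Λ * Λᵀ).mulVec w) : ℝ) : ℂ) * f t w = 0 := by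
  have hOO : O * Oᵀ = 1 := mul_eq_one_comm.mp hO
  subst hΛ
  refine ⟨fun w => by simp [hf, h0, hg0], fun t w => ?_⟩
  have hquad : ∀ v, v ⬝ᵥ (Oᵀ * diagonal (h · t) * O) *ᵥ v = ∑ i, h i t * (O *ᵥ v) i ^ 2 :=
    fun v => by rw [dotProduct_transpose_mul_mul_mulVec, dotProduct_diagonal_mulVec_self]
  have htime := hasDerivAt_mul_exp_sum_mul_sq (O *ᵥ w) (hgderiv t) (hderiv · t)
  have hriccati : ∑ i, (2 * h i t ^ 2 - η (half i) ^ 2 / 8) * (O *ᵥ w) i ^ 2 =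
      2 * ∑ i, h i t ^ 2 * (O *ᵥ w) i ^ 2 - 1 / 8 * ∑ i, η (half i) ^ 2 * (O *ᵥ w) i ^ 2 := by
    rw [Finset.mul_sum, Finset.mul_sum, ← Finset.sum_sub_distrib]
    exact Finset.sum_congr rfl fun _ _ => by ring
  simp only [hf, ← hquad]
  rw [htime.ofReal_comp.deriv, sum_deriv_deriv_ofReal_mul_exp_conj_diagonal hOO,
    sum_mul_deriv_ofReal_mul_exp_quadraticForm_update _ (transpose_conj_diagonal _),
    transpose_conj_canonicalSkew_mulVec_dotProduct_conj_diagonal_mulVec η hOO w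
      fun k => congrFun (hpair k) t,
    dotProduct_conj_canonicalSkew_mul_transpose_mulVec η hOO, hquad, hriccati]
  push_cast
  ring
end

section
/- Let d₁ be a natural number, d = 2·d₁, η : Fin d₁ → ℝ with η k > 0 for all k, O a real orthogonal d×d matrix (Oᵀ * O = 1), and Λ = Oᵀ * Σ(η) * O. Define 𝓛 : ℝ → (Fin d → ℝ) → ℂ by 𝓛 t w = ( ∏_{k<d₁} (cosh(η k · t/2))⁻¹ ) · exp( − ∑_{k<d₁} (η k /4) · ( ((O.mulVec w)(2k))² + ((O.mulVec w)(2k+1))² ) · tanh(η k · t/2) ) (a real number coerced to ℂ). Then 𝓛 0 w = 1 for all w, and 𝓛 satisfies, for all (t, w) ∈ ℝ × (Fin d → ℝ): −∂𝓛/∂t (t,w) + (1/2)·∑_{j} ∂²𝓛/∂wⱼ² (t,w) + (Complex.I/2)·∑_{j} ((Λᵀ.mulVec w) j) · ∂𝓛/∂wⱼ (t,w) − (1/8)·( w ⬝ᵥ ((Λ*Λᵀ).mulVec w) ) · 𝓛(t,w) = 0. -/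
/-!
In the rotated coordinates `y = O w` the function is `exp Φ` with
`Φ(t, y) = ∑ᵢ (-½ log cosh (aᵢ t / 2) - cᵢ(t) yᵢ²)`, `cᵢ(t) = (aᵢ / 4) tanh (aᵢ t / 2)`,
where `a = (η₀, η₀, η₁, η₁, …)`. As `O` is orthogonal, the Laplacian in `w` is the Laplacian
in `y`, and since `c = (a / 4) tanh (a t / 2)` solves the Riccati equation `c' = a² / 8 - 2 c²`,
`exp Φ` solves the harmonic-oscillator heat equation `∂ₜu = ½ Δu - ⅛ (∑ᵢ aᵢ² yᵢ²) u`.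
The potential is exactly `⅛ |Λᵀ w|² = ⅛ |Σᵀ y|²`, and the drift term vanishes because the
gradient `-2 c ⊙ y` of `Φ` is orthogonal to `Σᵀ y`: `Σ` is skew on each `2 × 2` block and
`c` is constant there.
-/

open Matrix

open Real

theorem Real.hasDerivAt_tanh (x : ℝ) : HasDerivAt tanh (1 - tanh x ^ 2) x := by
  have h := (hasDerivAt_sinh x).div (hasDerivAt_cosh x) (cosh_pos x).ne'
  rw [show tanh = sinh / cosh from funext tanh_eq_sinh_div_cosh]
  refine h.congr_deriv ?_
  rw [Pi.div_apply]
  field_simp [(cosh_pos x).ne']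

theorem Real.hasDerivAt_log_cosh (x : ℝ) : HasDerivAt (fun x => log (cosh x)) (tanh x) x := by
  simpa [← tanh_eq_sinh_div_cosh] using (hasDerivAt_cosh x).log (cosh_pos x).ne'

theorem deriv_deriv_ofReal_exp_comp {φ φ' : ℝ → ℝ} {φ'' x : ℝ}
    (hφ : ∀ s, HasDerivAt φ (φ' s) s) (hφ' : HasDerivAt φ' φ'' x) :
    deriv (deriv fun s => (Real.exp (φ s) : ℂ)) x =
      ((Real.exp (φ x) * (φ' x ^ 2 + φ'') : ℝ) : ℂ) := by
  have h : deriv (fun s => (Real.exp (φ s) : ℂ)) = fun s => ↑(Real.exp (φ s) * φ' s) :=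
    funext fun s => (hφ s).exp.ofReal_comp.deriv
  rw [h, ((hφ x).exp.fun_mul hφ').ofReal_comp.deriv]
  congr 1
  ring

noncomputable def levyCoeff (a t : ℝ) : ℝ := a / 4 * tanh (a * t / 2)

theorem levyCoeff_zero_right (a : ℝ) : levyCoeff a 0 = 0 := by simp [levyCoeff]

theorem hasDerivAt_levyCoeff (a t : ℝ) :
    HasDerivAt (levyCoeff a) (a ^ 2 / 8 - 2 * levyCoeff a t ^ 2) t := by
  have h := ((hasDerivAt_tanh (a * t / 2)).comp t
    (((hasDerivAt_id t).const_mul a).div_const 2)).const_mul (a / 4)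
  refine h.congr_deriv ?_
  simp only [levyCoeff]; ring

theorem hasDerivAt_neg_log_cosh_div_two (a t : ℝ) :
    HasDerivAt (fun t => -log (cosh (a * t / 2)) / 2) (-levyCoeff a t) t := by
  have h := (((hasDerivAt_log_cosh (a * t / 2)).comp t
    (((hasDerivAt_id t).const_mul a).div_const 2)).neg).div_const 2
  refine h.congr_deriv ?_
  simp only [levyCoeff]; ring

section Orthogonal

variable {n : Type*} [Fintype n] [DecidableEq n] {O : Matrix n n ℝ}

theorem dotProduct_vecMul_vecMul_of_mul_transpose (hO : O * Oᵀ = 1) (x z : n → ℝ) :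
    (x ᵥ* O) ⬝ᵥ (z ᵥ* O) = x ⬝ᵥ z := by
  rw [← dotProduct_mulVec, ← mulVec_transpose, mulVec_mulVec, hO, one_mulVec]

theorem sum_row_sq_of_mul_transpose (hO : O * Oᵀ = 1) (i : n) : ∑ j, O i j ^ 2 = 1 := by
  simpa [mul_apply, one_apply, sq] using congrFun (congrFun hO i) i

end Orthogonal

theorem hasDerivAt_mulVec_update {m n : Type*} [Fintype n] [DecidableEq n] (O : Matrix m n ℝ)
    (w : n → ℝ) (j : n) (i : m) (s : ℝ) :
    HasDerivAt (fun s => (O *ᵥ Function.update w j s) i) (O i j) s := by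
  have h := HasDerivAt.fun_sum (u := Finset.univ) fun k _ =>
    (hasDerivAt_pi.1 (hasDerivAt_update w j s) k).const_mul (O i k)
  refine h.congr_deriv ?_
  simp [Pi.single_apply]

section LevyExponent

variable {m n : Type*} [Fintype m]

noncomputable def levyExponent (a : m → ℝ) (t : ℝ) (y : m → ℝ) : ℝ :=
  ∑ i, (-log (cosh (a i * t / 2)) / 2 - levyCoeff (a i) t * y i ^ 2)

theorem levyExponent_at_zero (a y : m → ℝ) : levyExponent a 0 y = 0 := by
  simp [levyExponent, levyCoeff_zero_right]

theorem hasDerivAt_levyExponent_time (a y : m → ℝ) (t : ℝ) :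
    HasDerivAt (fun t => levyExponent a t y)
      (∑ i, (-levyCoeff (a i) t - (a i ^ 2 / 8 - 2 * levyCoeff (a i) t ^ 2) * y i ^ 2)) t :=
  HasDerivAt.fun_sum fun i _ =>
    (hasDerivAt_neg_log_cosh_div_two (a i) t).sub ((hasDerivAt_levyCoeff (a i) t).mul_const _)

variable [Fintype n] [DecidableEq n]

theorem hasDerivAt_levyExponent_mulVec_update (a : m → ℝ) (t : ℝ) (O : Matrix m n ℝ)
    (w : n → ℝ) (j : n) (s : ℝ) :
    HasDerivAt (fun s => levyExponent a t (O *ᵥ Function.update w j s))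
      (-2 * ((fun i => levyCoeff (a i) t * (O *ᵥ Function.update w j s) i) ᵥ* O) j) s := by
  have h := HasDerivAt.fun_sum (u := Finset.univ) fun i _ =>
    (((hasDerivAt_mulVec_update O w j i s).pow 2).const_mul (levyCoeff (a i) t)).const_sub
      (-log (cosh (a i * t / 2)) / 2)
  refine h.congr_deriv ?_
  simp only [vecMul, dotProduct, Finset.mul_sum]
  refine Finset.sum_congr rfl fun i _ => ?_
  push_cast; ring

theorem hasDerivAt_vecMul_levyCoeff_mulVec_update (a : m → ℝ) (t : ℝ) (O : Matrix m n ℝ)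
    (w : n → ℝ) (j : n) (s : ℝ) :
    HasDerivAt (fun s => ((fun i => levyCoeff (a i) t * (O *ᵥ Function.update w j s) i) ᵥ* O) j)
      (∑ i, levyCoeff (a i) t * O i j ^ 2) s := by
  have h := HasDerivAt.fun_sum (u := Finset.univ) fun i _ =>
    ((hasDerivAt_mulVec_update O w j i s).const_mul (levyCoeff (a i) t)).mul_const (O i j)
  refine h.congr_deriv ?_
  simp only [sq, mul_assoc]

end LevyExponent

section HeatEquation

variable {m n : Type*} [Fintype m] [Fintype n] [DecidableEq n]

theorem deriv_exp_levyExponent_mulVec_update (a : m → ℝ) (t : ℝ) (O : Matrix m n ℝ)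
    (w : n → ℝ) (j : n) :
    deriv (fun s => (Real.exp (levyExponent a t (O *ᵥ Function.update w j s)) : ℂ)) (w j) =
      ((Real.exp (levyExponent a t (O *ᵥ w)) *
        (-2 * ((fun i => levyCoeff (a i) t * (O *ᵥ w) i) ᵥ* O) j) : ℝ) : ℂ) := by
  simpa only [Function.update_eq_self] using
    (hasDerivAt_levyExponent_mulVec_update a t O w j (w j)).exp.ofReal_comp.deriv

theorem deriv_deriv_exp_levyExponent_mulVec_update (a : m → ℝ) (t : ℝ) (O : Matrix m n ℝ)
    (w : n → ℝ) (j : n) :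
    deriv (deriv fun s => (Real.exp (levyExponent a t (O *ᵥ Function.update w j s)) : ℂ))
        (w j) =
      ((Real.exp (levyExponent a t (O *ᵥ w)) *
        ((-2 * ((fun i => levyCoeff (a i) t * (O *ᵥ w) i) ᵥ* O) j) ^ 2 +
          -2 * ∑ i, levyCoeff (a i) t * O i j ^ 2) : ℝ) : ℂ) := by
  simpa only [Function.update_eq_self] using
    deriv_deriv_ofReal_exp_comp (hasDerivAt_levyExponent_mulVec_update a t O w j)
      ((hasDerivAt_vecMul_levyCoeff_mulVec_update a t O w j (w j)).const_mul (-2))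

variable {O : Matrix n n ℝ}

theorem sum_deriv_deriv_exp_levyExponent_mulVec_update (hO : O * Oᵀ = 1) (a : n → ℝ) (t : ℝ)
    (w : n → ℝ) :
    ∑ j, deriv (deriv fun s => (Real.exp (levyExponent a t (O *ᵥ Function.update w j s)) : ℂ))
        (w j) =
      ((Real.exp (levyExponent a t (O *ᵥ w)) *
        ∑ i, (4 * (levyCoeff (a i) t * (O *ᵥ w) i) ^ 2 - 2 * levyCoeff (a i) t) : ℝ) : ℂ) := by
  simp_rw [deriv_deriv_exp_levyExponent_mulVec_update, ← Complex.ofReal_sum,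
    ← Finset.mul_sum]
  congr 2
  set g := fun i => levyCoeff (a i) t * (O *ᵥ w) i
  calc ∑ j, ((-2 * (g ᵥ* O) j) ^ 2 + -2 * ∑ i, levyCoeff (a i) t * O i j ^ 2)
      = 4 * ((g ᵥ* O) ⬝ᵥ (g ᵥ* O)) - 2 * ∑ j, ∑ i, levyCoeff (a i) t * O i j ^ 2 := by
        rw [dotProduct, Finset.mul_sum, Finset.mul_sum, ← Finset.sum_sub_distrib]
        exact Finset.sum_congr rfl fun j _ => by ring
    _ = 4 * (g ⬝ᵥ g) - 2 * ∑ i, levyCoeff (a i) t * ∑ j, O i j ^ 2 := by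
        rw [dotProduct_vecMul_vecMul_of_mul_transpose hO, Finset.sum_comm]
        simp only [Finset.mul_sum]
    _ = ∑ i, (4 * g i ^ 2 - 2 * levyCoeff (a i) t) := by
        simp only [sum_row_sq_of_mul_transpose hO, mul_one, dotProduct, Finset.mul_sum,
          ← Finset.sum_sub_distrib]
        exact Finset.sum_congr rfl fun i _ => by ring

theorem levyExponent_heat_equation (hO : O * Oᵀ = 1) (a : n → ℝ) (t : ℝ) (w : n → ℝ) :
    -deriv (fun s => (Real.exp (levyExponent a s (O *ᵥ w)) : ℂ)) t
      + 1 / 2 * ∑ j, deriv (deriv fun s =>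
          (Real.exp (levyExponent a t (O *ᵥ Function.update w j s)) : ℂ)) (w j)
      - 1 / 8 * ((∑ i, a i ^ 2 * (O *ᵥ w) i ^ 2 : ℝ) : ℂ) *
          (Real.exp (levyExponent a t (O *ᵥ w)) : ℂ) = 0 := by
  rw [(hasDerivAt_levyExponent_time a (O *ᵥ w) t).exp.ofReal_comp.deriv,
    sum_deriv_deriv_exp_levyExponent_mulVec_update hO]
  set E := Real.exp (levyExponent a t (O *ᵥ w))
  set y := O *ᵥ w
  have hsum :
      -(∑ i, (-levyCoeff (a i) t - (a i ^ 2 / 8 - 2 * levyCoeff (a i) t ^ 2) * y i ^ 2))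
      + 1 / 2 * ∑ i, (4 * (levyCoeff (a i) t * y i) ^ 2 - 2 * levyCoeff (a i) t)
      - 1 / 8 * ∑ i, a i ^ 2 * y i ^ 2 = 0 := by
    simp only [Finset.mul_sum, ← Finset.sum_neg_distrib, ← Finset.sum_add_distrib,
      ← Finset.sum_sub_distrib]
    exact Finset.sum_eq_zero fun i _ => by ring
  have hsumℂ := congrArg Complex.ofReal hsum
  push_cast at hsumℂ ⊢
  linear_combination (E : ℂ) * hsumℂ

theorem sum_vecMul_mul_deriv_exp_levyExponent (hO : O * Oᵀ = 1) (a : n → ℝ) (t : ℝ)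
    (v w : n → ℝ) :
    ∑ j, ((v ᵥ* O) j : ℂ) *
        deriv (fun s => (Real.exp (levyExponent a t (O *ᵥ Function.update w j s)) : ℂ)) (w j) =
      ((Real.exp (levyExponent a t (O *ᵥ w)) *
        (-2 * (v ⬝ᵥ fun i => levyCoeff (a i) t * (O *ᵥ w) i)) : ℝ) : ℂ) := by
  simp_rw [deriv_exp_levyExponent_mulVec_update, ← Complex.ofReal_mul, ← Complex.ofReal_sum,
    ← dotProduct_vecMul_vecMul_of_mul_transpose hO v, dotProduct, Finset.mul_sum]
  exact congrArg Complex.ofReal (Finset.sum_congr rfl fun j _ => by ring)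

end HeatEquation

section Conjugation

variable {n : Type*} [Fintype n]

theorem dotProduct_mul_transpose_mulVec (A : Matrix n n ℝ) (w : n → ℝ) :
    w ⬝ᵥ ((A * Aᵀ) *ᵥ w) = (Aᵀ *ᵥ w) ⬝ᵥ (Aᵀ *ᵥ w) := by
  rw [← mulVec_mulVec, dotProduct_mulVec, mulVec_transpose]

theorem transpose_mul_mul_transpose_mulVec (O S : Matrix n n ℝ) (w : n → ℝ) :
    (Oᵀ * S * O)ᵀ *ᵥ w = ((O *ᵥ w) ᵥ* S) ᵥ* O := by
  rw [mulVec_transpose, ← vecMul_vecMul, ← vecMul_vecMul, vecMul_transpose]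

end Conjugation

section Blocks

variable {d₁ : ℕ}

def evenOddEquiv (d₁ : ℕ) : Fin d₁ × Fin 2 ≃ Fin (2 * d₁) :=
  finProdFinEquiv.trans (finCongr (Nat.mul_comm d₁ 2))

theorem evenOddEquiv_apply_val (x : Fin d₁ × Fin 2) :
    (evenOddEquiv d₁ x : ℕ) = x.2 + 2 * x.1 := rfl

theorem evenOddEquiv_zero (k : Fin d₁) : evenOddEquiv d₁ (k, 0) = idx0 k := by
  ext; simp [evenOddEquiv_apply_val, idx0]

theorem evenOddEquiv_one (k : Fin d₁) : evenOddEquiv d₁ (k, 1) = idx1 k := by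
  ext; simp [evenOddEquiv_apply_val, idx1]; ring

theorem sum_fin_two_mul {M : Type*} [AddCommMonoid M] (f : Fin (2 * d₁) → M) :
    ∑ i, f i = ∑ k, (f (idx0 k) + f (idx1 k)) := by
  simp [← (evenOddEquiv d₁).sum_comp, Fintype.sum_prod_type, evenOddEquiv_zero,
    evenOddEquiv_one]

def repeatTwice {α : Type*} (η : Fin d₁ → α) (i : Fin (2 * d₁)) : α :=
  η ((evenOddEquiv d₁).symm i).1

@[simp] theorem repeatTwice_idx0 {α : Type*} (η : Fin d₁ → α) (k : Fin d₁) :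
    repeatTwice η (idx0 k) = η k := by
  simp [repeatTwice, ← evenOddEquiv_zero]

@[simp] theorem repeatTwice_idx1 {α : Type*} (η : Fin d₁ → α) (k : Fin d₁) :
    repeatTwice η (idx1 k) = η k := by
  simp [repeatTwice, ← evenOddEquiv_one]

theorem exp_levyExponent_repeatTwice (η : Fin d₁ → ℝ) (t : ℝ) (y : Fin (2 * d₁) → ℝ) :
    Real.exp (levyExponent (repeatTwice η) t y) =
      (∏ k, (cosh (η k * t / 2))⁻¹) *
        Real.exp (-∑ k, (η k / 4) * (y (idx0 k) ^ 2 + y (idx1 k) ^ 2) * tanh (η k * t / 2)) := by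
  have hsplit : levyExponent (repeatTwice η) t y = ∑ k, -log (cosh (η k * t / 2)) +
      -∑ k, (η k / 4) * (y (idx0 k) ^ 2 + y (idx1 k) ^ 2) * tanh (η k * t / 2) := by
    rw [levyExponent, sum_fin_two_mul, ← Finset.sum_neg_distrib, ← Finset.sum_add_distrib]
    refine Finset.sum_congr rfl fun k _ => ?_
    simp only [repeatTwice_idx0, repeatTwice_idx1, levyCoeff]
    ring
  rw [hsplit, Real.exp_add, Real.exp_sum]
  congr 1
  exact Finset.prod_congr rfl fun k _ => by rw [Real.exp_neg, Real.exp_log (cosh_pos _)]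

variable (η : Fin d₁ → ℝ)

theorem canonicalSkew_evenOddEquiv (k l : Fin d₁) (a b : Fin 2) :
    canonicalSkew (2 * d₁) d₁ η (evenOddEquiv d₁ (k, a)) (evenOddEquiv d₁ (l, b)) =
      if k = l then !![0, -η k; η k, 0] a b else 0 := by
  have ha : ((a : ℕ) + 2 * k) / 2 = k := by omega
  have hb : ((b : ℕ) + 2 * l) / 2 = l := by omega
  simp only [canonicalSkew, of_apply, evenOddEquiv_apply_val, ha, hb,
    Nat.add_mul_mod_self_left, Fin.val_inj, k.isLt, true_and]
  split_ifs with h <;> subst_vars <;> fin_cases a <;> fin_cases b <;> simp_all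

theorem vecMul_canonicalSkew_idx0 (y : Fin (2 * d₁) → ℝ) (l : Fin d₁) :
    (y ᵥ* canonicalSkew (2 * d₁) d₁ η) (idx0 l) = η l * y (idx1 l) := by
  simp only [vecMul, dotProduct, ← (evenOddEquiv d₁).sum_comp, Fintype.sum_prod_type,
    ← evenOddEquiv_zero, ← evenOddEquiv_one, canonicalSkew_evenOddEquiv]
  simp [Fin.sum_univ_two, mul_comm]

theorem vecMul_canonicalSkew_idx1 (y : Fin (2 * d₁) → ℝ) (l : Fin d₁) :
    (y ᵥ* canonicalSkew (2 * d₁) d₁ η) (idx1 l) = -(η l * y (idx0 l)) := by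
  simp only [vecMul, dotProduct, ← (evenOddEquiv d₁).sum_comp, Fintype.sum_prod_type,
    ← evenOddEquiv_zero, ← evenOddEquiv_one, canonicalSkew_evenOddEquiv]
  simp [Fin.sum_univ_two, mul_comm]

theorem vecMul_canonicalSkew_dotProduct_mul_eq_zero {c : Fin (2 * d₁) → ℝ}
    (hc : ∀ k, c (idx0 k) = c (idx1 k)) (y : Fin (2 * d₁) → ℝ) :
    (y ᵥ* canonicalSkew (2 * d₁) d₁ η) ⬝ᵥ (fun i => c i * y i) = 0 := by
  rw [dotProduct, sum_fin_two_mul]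
  refine Finset.sum_eq_zero fun k _ => ?_
  rw [vecMul_canonicalSkew_idx0, vecMul_canonicalSkew_idx1, hc]
  ring

theorem dotProduct_vecMul_canonicalSkew_self (y : Fin (2 * d₁) → ℝ) :
    (y ᵥ* canonicalSkew (2 * d₁) d₁ η) ⬝ᵥ (y ᵥ* canonicalSkew (2 * d₁) d₁ η) =
      ∑ i, repeatTwice η i ^ 2 * y i ^ 2 := by
  rw [dotProduct, sum_fin_two_mul, sum_fin_two_mul]
  refine Finset.sum_congr rfl fun k _ => ?_
  simp only [vecMul_canonicalSkew_idx0, vecMul_canonicalSkew_idx1, repeatTwice_idx0,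
    repeatTwice_idx1]
  ring

end Blocks

theorem levy_char_solves_pde_general (d₁ : ℕ) (η : Fin d₁ → ℝ)
    (O : Matrix (Fin (2 * d₁)) (Fin (2 * d₁)) ℝ) (hO : Oᵀ * O = 1)
    (Λ : Matrix (Fin (2 * d₁)) (Fin (2 * d₁)) ℝ)
    (hΛ : Λ = Oᵀ * canonicalSkew (2 * d₁) d₁ η * O)
    (𝓛 : ℝ → (Fin (2 * d₁) → ℝ) → ℂ)
    (h𝓛 : ∀ t w, 𝓛 t w =
      (((∏ k : Fin d₁, (Real.cosh (η k * t / 2))⁻¹) *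
        Real.exp (-∑ k : Fin d₁, (η k / 4) *
          ((O.mulVec w (idx0 k)) ^ 2 + (O.mulVec w (idx1 k)) ^ 2) *
          Real.tanh (η k * t / 2)) : ℝ) : ℂ)) :
    (∀ w, 𝓛 0 w = 1) ∧
    ∀ (t : ℝ) (w : Fin (2 * d₁) → ℝ),
      -(deriv (fun s => 𝓛 s w) t)
      + (1 / 2) * ∑ j, deriv (deriv (fun s => 𝓛 t (Function.update w j s))) (w j)
      + (Complex.I / 2) * ∑ j, ((Λᵀ.mulVec w j : ℝ) : ℂ) *
          deriv (fun s => 𝓛 t (Function.update w j s)) (w j)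
      - (1 / 8) * ((w ⬝ᵥ ((Λ * Λᵀ).mulVec w) : ℝ) : ℂ) * 𝓛 t w = 0 := by
  have hOOt : O * Oᵀ = 1 := mul_eq_one_comm.mp hO
  obtain rfl : 𝓛 = fun t w => (Real.exp (levyExponent (repeatTwice η) t (O *ᵥ w)) : ℂ) := by
    funext t w
    rw [h𝓛, exp_levyExponent_repeatTwice]
  subst hΛ
  refine ⟨fun w => by simp [levyExponent_at_zero], fun t w => ?_⟩
  have hdrift := sum_vecMul_mul_deriv_exp_levyExponent hOOt (repeatTwice η) t
    ((O *ᵥ w) ᵥ* canonicalSkew (2 * d₁) d₁ η) w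
  rw [vecMul_canonicalSkew_dotProduct_mul_eq_zero η (by simp)] at hdrift
  simp only [transpose_mul_mul_transpose_mulVec, dotProduct_mul_transpose_mulVec, hdrift,
    dotProduct_vecMul_vecMul_of_mul_transpose hOOt, dotProduct_vecMul_canonicalSkew_self]
  simpa using levyExponent_heat_equation hOOt (repeatTwice η) t w

/-- The explicit formula for the conditional characteristic function of the Lévy area of
`d`-dimensional Brownian motion (non-degenerate case `d = 2d₁`, `Λ = OᵀΣ(η)O`, `η k > 0`)
has value `1` at `t = 0` and solves the PDE
`−∂ₜ𝓛 + ½Δ𝓛 + (i/2)∑ⱼ(wᵀΛ)ⱼ∂ⱼ𝓛 − (1/8)(wᵀΛΛᵀw)𝓛 = 0`. -/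
theorem levy_char_solves_pde (d₁ : ℕ) (η : Fin d₁ → ℝ) (hη : ∀ k, 0 < η k)
    (O : Matrix (Fin (2 * d₁)) (Fin (2 * d₁)) ℝ) (hO : Oᵀ * O = 1)
    (Λ : Matrix (Fin (2 * d₁)) (Fin (2 * d₁)) ℝ)
    (hΛ : Λ = Oᵀ * canonicalSkew (2 * d₁) d₁ η * O)
    (𝓛 : ℝ → (Fin (2 * d₁) → ℝ) → ℂ)
    (h𝓛 : ∀ t w, 𝓛 t w =
      (((∏ k : Fin d₁, (Real.cosh (η k * t / 2))⁻¹) *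
        Real.exp (-∑ k : Fin d₁, (η k / 4) *
          ((O.mulVec w (idx0 k)) ^ 2 + (O.mulVec w (idx1 k)) ^ 2) *
          Real.tanh (η k * t / 2)) : ℝ) : ℂ)) :
    (∀ w, 𝓛 0 w = 1) ∧
    ∀ (t : ℝ) (w : Fin (2 * d₁) → ℝ),
      -(deriv (fun s => 𝓛 s w) t)
      + (1 / 2) * ∑ j, deriv (deriv (fun s => 𝓛 t (Function.update w j s))) (w j)
      + (Complex.I / 2) * ∑ j, ((Λᵀ.mulVec w j : ℝ) : ℂ) *
          deriv (fun s => 𝓛 t (Function.update w j s)) (w j)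
      - (1 / 8) * ((w ⬝ᵥ ((Λ * Λᵀ).mulVec w) : ℝ) : ℂ) * 𝓛 t w = 0 :=
  levy_char_solves_pde_general d₁ η O hO Λ hΛ 𝓛 h𝓛
end
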